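/- Being D** is a Whitney property: if X is a D**-continuum, μ : C(X) → [0, μ(X)] is a Whitney map, and t ∈ (0, μ(X)), then the Whitney level μ⁻¹(t), regarded as a subspace of C(X) with the Hausdorff metric, is a D**-continuum. -/

import Mathlib

/-!
Write `L = μ⁻¹(t)` and order `C(X)` by inclusion, so that `μ` is strictly monotone.

Connectedness of `L`, and of its traces on `[F, Z] = {A : F ⊆ A ⊆ Z}`, is the classical argument.
Boundary bumping lets a proper subcontinuum of `Z` grow by a small Hausdorff distance inside `Z`,
so `μ` has no local maximum on `[F, Z]` except at `Z`, which makes `[F, Z]` connected; hence the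
sublevel family `Λ = [F, Z] ∩ μ⁻¹[0, t]`, a union of such intervals `[F, A]` hanging on a common
connected base, is connected. A separation `H ⊔ K` of the level
`[F, Z] ∩ L` induces a closed cover of `Λ` by the continua lying below a member of `H`, resp. of
`K`. A `μ`-maximal continuum in their intersection can be bumped inside a member of `H` and inside
a member of `K`; the union of the two bumps lies below some member of the level, and one of the
two bumps then contradicts maximality.

For D**, let `𝒜, ℬ ⊆ L` be subcontinua with unions `A*` and `B*`; members of `L` are pairwise
incomparable. If `A*` and `B*` meet, the witness is `{A ∈ L : q ∈ A}` for a common point `q`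
missing from some member of `ℬ`, or `{A ∈ L : A ⊆ A₀ ∪ B₀}` for suitable `A₀ ∈ 𝒜, B₀ ∈ ℬ`. If
they are disjoint, the D** property of `X` gives a continuum `C` from `A*` to `B*` missing a point
of `B*`, and the witness is built in the same way from `C` and members of `𝒜` and `ℬ`.
-/

open TopologicalSpace

/-- A topological space is a *D**-space* if for every pair of disjoint nondegenerate
subcontinua `A, B` there is a subcontinuum `C` meeting both `A` and `B` with `B \ C ≠ ∅`. -/
def DStarStarSpace (X : Type*) [TopologicalSpace X] : Prop :=
  ∀ A B : Set X, IsCompact A → IsConnected A → A.Nontrivial →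
    IsCompact B → IsConnected B → B.Nontrivial → Disjoint A B →
    ∃ C : Set X, IsCompact C ∧ IsConnected C ∧
      (A ∩ C).Nonempty ∧ (B ∩ C).Nonempty ∧ (B \ C).Nonempty

/-- The hyperspace `C(X)` of all subcontinua of `X`, i.e. nonempty compact connected
subsets, with the Hausdorff metric. -/
abbrev Hyperspace (X : Type*) [MetricSpace X] : Type _ :=
  {K : NonemptyCompacts X // IsConnected (K : Set X)}

open Set Metric Topology

theorem exists_isClopen_mem_disjoint_of_disjoint_connectedComponent {α : Type*}
    [TopologicalSpace α] [T2Space α] [CompactSpace α] {x : α} {F : Set α} (hF : IsClosed F)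
    (h : Disjoint (connectedComponent x) F) : ∃ V, IsClopen V ∧ x ∈ V ∧ Disjoint V F := by
  rw [connectedComponent_eq_iInter_isClopen, disjoint_comm, disjoint_iff_inter_eq_empty] at h
  obtain ⟨u, hu⟩ := hF.isCompact.elim_finite_subfamily_closed _ (fun s => s.2.1.isClosed) h
  refine ⟨⋂ s ∈ u, (s : Set α), isClopen_biInter_finset fun s _ => s.2.1,
    mem_iInter₂.2 fun s _ => s.2.2, ?_⟩
  rwa [disjoint_comm, disjoint_iff_inter_eq_empty]

/-- The boundary bumping theorem. -/
theorem IsClosed.connectedComponentIn_inter_frontier_nonempty {Y : Type*} [TopologicalSpace Y]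
    [T2Space Y] [CompactSpace Y] [ConnectedSpace Y] {K : Set Y} (hK : IsClosed K)
    (hKne : K ≠ univ) {x : Y} (hx : x ∈ K) : (connectedComponentIn K x ∩ frontier K).Nonempty := by
  by_contra hdisj
  have : CompactSpace K := isCompact_iff_compactSpace.mp hK.isCompact
  obtain ⟨V, hV, hxV, hVF⟩ := exists_isClopen_mem_disjoint_of_disjoint_connectedComponent
    (x := ⟨x, hx⟩) (isClosed_frontier.preimage continuous_subtype_val) <| by
      rw [← disjoint_image_iff Subtype.val_injective, ← connectedComponentIn_eq_image hx,
        disjoint_iff_inter_eq_empty, ← not_nonempty_iff_eq_empty]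
      exact fun ⟨y, hy, z, hz, hzy⟩ => hdisj ⟨y, hy, hzy ▸ hz⟩
  obtain ⟨W, hW, rfl⟩ := isOpen_induced_iff.1 hV.isOpen
  have hWK : K ∩ W = W ∩ interior K := by
    refine subset_antisymm (fun y ⟨hyK, hyW⟩ => ⟨hyW, by_contra fun hyi => ?_⟩)
      (fun y ⟨hyW, hyi⟩ => ⟨interior_subset hyi, hyW⟩)
    exact hVF.ne_of_mem (a := ⟨y, hyK⟩) (b := ⟨y, hyK⟩) hyW
      (by rw [mem_preimage, hK.frontier_eq]; exact ⟨hyK, hyi⟩) rfl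
  have hclopen : IsClopen (W ∩ interior K) := by
    refine ⟨?_, hW.inter isOpen_interior⟩
    rw [← hWK, ← Subtype.image_preimage_coe]
    exact (hV.isClosed.isCompact.image continuous_subtype_val).isClosed
  have hxWK : x ∈ W ∩ interior K := hWK ▸ ⟨hx, hxV⟩
  exact hKne <| eq_univ_of_univ_subset <| (hclopen.eq_univ ⟨x, hxWK⟩).symm.subset.trans
    (inter_subset_right.trans interior_subset)

theorem IsConnected.exists_isPreconnected_sublevel_touching {X : Type*} [TopologicalSpace X]
    [T2Space X] {Z : Set X} (hZc : IsCompact Z) (hZ : IsConnected Z) {f : X → ℝ}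
    (hf : Continuous f) {r : ℝ} {x₀ z : X} (hx₀ : x₀ ∈ Z) (hx₀r : f x₀ ≤ r) (hz : z ∈ Z)
    (hzr : r < f z) :
    ∃ Q ⊆ Z, IsPreconnected Q ∧ x₀ ∈ Q ∧ (∀ y ∈ Q, f y ≤ r) ∧ ∃ w ∈ Q, f w = r := by
  have : CompactSpace Z := isCompact_iff_compactSpace.mp hZc
  have : ConnectedSpace Z := Subtype.connectedSpace hZ
  have hfZ : Continuous fun y : Z => f y := hf.comp continuous_subtype_val
  set K : Set Z := {y | f y ≤ r}
  have hK : IsClosed K := isClosed_le hfZ continuous_const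
  have hKne : K ≠ univ := fun h => by
    have hzK : (⟨z, hz⟩ : Z) ∈ K := h ▸ mem_univ _
    exact absurd hzK (not_le.2 hzr)
  obtain ⟨w, hwQ, hwK⟩ := hK.connectedComponentIn_inter_frontier_nonempty hKne (x := ⟨x₀, hx₀⟩) hx₀r
  refine ⟨Subtype.val '' connectedComponentIn K ⟨x₀, hx₀⟩, Subtype.coe_image_subset _ _,
    isPreconnected_connectedComponentIn.image _ continuous_subtype_val.continuousOn,
    ⟨_, mem_connectedComponentIn hx₀r, rfl⟩, ?_, w, ⟨w, hwQ, rfl⟩,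
    frontier_le_subset_eq hfZ continuous_const hwK⟩
  rintro _ ⟨y, hy, rfl⟩
  exact connectedComponentIn_subset K _ hy

theorem IsCompact.isPreconnected_of_forall_exists_gt {α β : Type*} [TopologicalSpace α]
    [LinearOrder β] [TopologicalSpace β] [ClosedIciTopology β] {s : Set α} (hs : IsCompact s)
    {f : α → β} (hf : ContinuousOn f s) {a : α} (ha : a ∈ s)
    (h : ∀ x ∈ s, x ≠ a → ∀ U ∈ 𝓝 x, ∃ y ∈ s ∩ U, f x < f y) : IsPreconnected s := by
  have key : ∀ u v : Set α, IsOpen u → IsOpen v → s ⊆ u ∪ v → s ∩ (u ∩ v) = ∅ → a ∈ u →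
      s ⊆ u := by
    intro u v hu hv hsuv huv hau
    by_contra hsu
    obtain ⟨x, ⟨hxs, hxu⟩, hmax⟩ :=
      (hs.diff hu).exists_isMaxOn (nonempty_of_not_subset hsu) (hf.mono sdiff_subset)
    have hxv : x ∈ v := (hsuv hxs).resolve_left hxu
    obtain ⟨y, ⟨hys, hyv⟩, hxy⟩ := h x hxs (fun hxa => hxu (hxa ▸ hau)) v (hv.mem_nhds hxv)
    have hyu : y ∉ u := fun hyu => (eq_empty_iff_forall_notMem.1 huv) y ⟨hys, hyu, hyv⟩
    exact (hmax ⟨hys, hyu⟩).not_gt hxy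
  refine isPreconnected_iff_subset_of_disjoint.2 fun u v hu hv hsuv huv => ?_
  rcases hsuv ha with hau | hav
  · exact .inl (key u v hu hv hsuv huv hau)
  · exact .inr (key v u hv hu (union_comm u v ▸ hsuv) (inter_comm u v ▸ huv) hav)

theorem IsClosed.lowerClosure_of_compactSpace {α : Type*} [Preorder α] [TopologicalSpace α]
    [OrderClosedTopology α] [CompactSpace α] {s : Set α} (hs : IsClosed s) :
    IsClosed (lowerClosure s : Set α) := by
  have : (lowerClosure s : Set α) = Prod.fst '' {p : α × α | p.1 ≤ p.2 ∧ p.2 ∈ s} := by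
    ext x
    simp [and_comm]
  rw [this]
  exact isClosedMap_fst_of_compactSpace _ (isClosed_le_prod.inter (hs.preimage continuous_snd))

def IsDStarStarWitness {α : Type*} [TopologicalSpace α] (A B C : Set α) : Prop :=
  IsCompact C ∧ IsConnected C ∧ (A ∩ C).Nonempty ∧ (B ∩ C).Nonempty ∧ (B \ C).Nonempty

theorem dStarStarSpace_subtype {α : Type*} [TopologicalSpace α] {s : Set α}
    (h : ∀ A B : Set α, A ⊆ s → B ⊆ s → IsCompact A → IsConnected A → A.Nontrivial →
      IsCompact B → IsConnected B → B.Nontrivial → Disjoint A B →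
      ∃ C ⊆ s, IsDStarStarWitness A B C) :
    DStarStarSpace s := by
  intro A B hAc hA hAnt hBc hB hBnt hAB
  have hval := continuous_subtype_val (p := (· ∈ s))
  obtain ⟨C, hCs, hCc, hC, ⟨_, ⟨a, ha, rfl⟩, haC⟩, ⟨_, ⟨b, hb, rfl⟩, hbC⟩,
      ⟨_, ⟨b', hb', rfl⟩, hb'C⟩⟩ :=
    h _ _ (Subtype.coe_image_subset s A) (Subtype.coe_image_subset s B) (hAc.image hval)
      (hA.image _ hval.continuousOn) (hAnt.image Subtype.val_injective) (hBc.image hval)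
      (hB.image _ hval.continuousOn) (hBnt.image Subtype.val_injective)
      ((disjoint_image_iff Subtype.val_injective).2 hAB)
  have hCimage : Subtype.val '' (Subtype.val ⁻¹' C : Set s) = C := by
    rw [Subtype.image_preimage_coe, inter_eq_right.2 hCs]
  refine ⟨Subtype.val ⁻¹' C, ?_, ?_, ⟨a, ha, haC⟩, ⟨b, hb, hbC⟩, ⟨b', hb', hb'C⟩⟩
  · rwa [Topology.IsEmbedding.subtypeVal.isCompact_iff, hCimage]
  · obtain ⟨c, hc⟩ := hC.nonempty
    refine ⟨⟨⟨c, hCs hc⟩, hc⟩, ?_⟩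
    rw [← Topology.IsInducing.subtypeVal.isPreconnected_image, hCimage]
    exact hC.isPreconnected

namespace Hyperspace

variable {X : Type*} [MetricSpace X]

def mk (s : Set X) (hs : IsCompact s) (hc : IsConnected s) : Hyperspace X :=
  ⟨⟨⟨s, hs⟩, hc.nonempty⟩, hc⟩

protected def singleton (x : X) : Hyperspace X :=
  mk {x} isCompact_singleton isConnected_singleton

theorem singleton_le_iff {x : X} {A : Hyperspace X} :
    Hyperspace.singleton x ≤ A ↔ x ∈ (A : Set X) :=
  singleton_subset_iff

theorem continuous_singleton : Continuous (Hyperspace.singleton : X → Hyperspace X) :=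
  NonemptyCompacts.isometry_singleton.continuous.subtype_mk _

def union (A B : Hyperspace X) (h : ((A : Set X) ∩ B).Nonempty) : Hyperspace X :=
  mk ((A : Set X) ∪ B) (A.1.isCompact.union B.1.isCompact) (A.2.union h B.2)

theorem dist_eq (A B : Hyperspace X) : dist A B = hausdorffDist (A : Set X) B := rfl

theorem dist_union_le {A B C : Hyperspace X} (h : ((A : Set X) ∩ B).Nonempty) :
    dist (union A B h) C ≤ max (dist A C) (dist B C) := by
  have h₁ : dist (union A B h) C = dist (A.1 ⊔ B.1) (C.1 ⊔ C.1) := by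
    rw [sup_idem]
    rfl
  rw [h₁]
  simpa [Prod.dist_eq, Subtype.dist_eq] using
    (NonemptyCompacts.lipschitz_sup (α := X)).dist_le_mul (A.1, B.1) (C.1, C.1)

theorem isClosed_setOf_isConnected :
    IsClosed {K : NonemptyCompacts X | IsConnected (K : Set X)} := by
  refine isOpen_compl_iff.1 (isOpen_iff_forall_mem_open.2 fun K hK => ?_)
  have hK' : ¬IsPreconnected (K : Set X) := fun h => hK ⟨K.nonempty, h⟩
  rw [isPreconnected_iff_subset_of_fully_disjoint_closed K.isCompact.isClosed] at hK'
  push Not at hK'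
  obtain ⟨a, b, ha, hb, hKab, hab, hKa, hKb⟩ := hK'
  obtain ⟨u, v, hu, hv, hau, hbv, huv⟩ := normal_separation ha hb hab
  obtain ⟨x, hxK, hxa⟩ := not_subset.1 hKb
  obtain ⟨y, hyK, hyb⟩ := not_subset.1 hKa
  refine ⟨{L | (L : Set X) ⊆ u ∪ v} ∩ {L | ((L : Set X) ∩ u).Nonempty} ∩
      {L | ((L : Set X) ∩ v).Nonempty}, ?_,
    ((NonemptyCompacts.isOpen_subsets_of_isOpen (hu.union hv)).inter
      (NonemptyCompacts.isOpen_inter_nonempty_of_isOpen hu)).inter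
      (NonemptyCompacts.isOpen_inter_nonempty_of_isOpen hv),
    ⟨⟨hKab.trans (union_subset_union hau hbv), x, hxK, hau ((hKab hxK).resolve_right hxa)⟩,
      y, hyK, hbv ((hKab hyK).resolve_left hyb)⟩⟩
  rintro L ⟨⟨hLuv, hLu⟩, hLv⟩ hL
  obtain ⟨z, -, hzu, hzv⟩ := hL.isPreconnected u v hu hv hLuv hLu hLv
  exact huv.ne_of_mem hzu hzv rfl

instance [CompactSpace X] : CompactSpace (Hyperspace X) :=
  isCompact_iff_compactSpace.mp isClosed_setOf_isConnected.isCompact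

theorem isClosed_setOf_le : IsClosed {p : Hyperspace X × Hyperspace X | p.1 ≤ p.2} := by
  refine isOpen_compl_iff.1 (isOpen_iff_forall_mem_open.2 fun p hp => ?_)
  obtain ⟨x, hx₁, hx₂⟩ := not_subset.1 hp
  obtain ⟨U, V, hU, hV, hxU, hV₂, hUV⟩ := SeparatedNhds.of_isCompact_isCompact isCompact_singleton
    p.2.1.isCompact (disjoint_singleton_left.2 hx₂)
  refine ⟨{q | ((q.1 : Set X) ∩ U).Nonempty ∧ (q.2 : Set X) ⊆ V}, ?_, ?_,
    ⟨x, hx₁, hxU rfl⟩, hV₂⟩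
  · rintro q ⟨⟨y, hy, hyU⟩, hq₂⟩ hq
    exact hUV.ne_of_mem hyU (hq₂ (hq hy)) rfl
  · exact ((NonemptyCompacts.isOpen_inter_nonempty_of_isOpen hU).preimage
      (continuous_subtype_val.comp continuous_fst)).inter
      ((NonemptyCompacts.isOpen_subsets_of_isOpen hV).preimage
      (continuous_subtype_val.comp continuous_snd))

instance : OrderClosedTopology (Hyperspace X) :=
  ⟨isClosed_setOf_le⟩

theorem exists_lt_le_dist_lt {A Z : Hyperspace X} (hAZ : A < Z) {ε : ℝ} (hε : 0 < ε) :
    ∃ B, A < B ∧ B ≤ Z ∧ dist B A < ε := by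
  obtain ⟨z, hzZ, hzA⟩ := exists_of_ssubset (show (A : Set X) ⊂ Z from hAZ)
  have hz : 0 < infDist z A :=
    (A.1.isCompact.isClosed.notMem_iff_infDist_pos A.1.nonempty).1 hzA
  set r := min (ε / 2) (infDist z A / 2)
  have hr : 0 < r := lt_min (half_pos hε) (half_pos hz)
  obtain ⟨x₀, hx₀⟩ := A.1.nonempty
  obtain ⟨Q, hQZ, hQ, hx₀Q, hQr, w, hwQ, hwr⟩ :=
    Z.2.exists_isPreconnected_sublevel_touching Z.1.isCompact (continuous_infDist_pt (A : Set X))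
      (hAZ.le hx₀) (by rw [infDist_zero_of_mem hx₀]; exact hr.le) hzZ
      ((min_le_right _ _).trans_lt (half_lt_self hz))
  have hQc : IsCompact (closure Q) :=
    Z.1.isCompact.of_isClosed_subset isClosed_closure (closure_minimal hQZ Z.1.isCompact.isClosed)
  have hQr' : closure Q ⊆ {y | infDist y A ≤ r} :=
    closure_minimal hQr (isClosed_le (continuous_infDist_pt _) continuous_const)
  refine ⟨mk ((A : Set X) ∪ closure Q) (A.1.isCompact.union hQc)
    (A.2.union ⟨x₀, hx₀, subset_closure hx₀Q⟩ ⟨⟨x₀, subset_closure hx₀Q⟩, hQ.closure⟩), ?_, ?_, ?_⟩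
  · refine (ssubset_iff_of_subset subset_union_left).2 ⟨w, .inr (subset_closure hwQ), fun hwA => ?_⟩
    rw [infDist_zero_of_mem hwA] at hwr
    exact hr.ne hwr
  · exact union_subset hAZ.le (closure_minimal hQZ Z.1.isCompact.isClosed)
  · rw [dist_eq]
    refine (hausdorffDist_le_of_infDist hr.le ?_ ?_).trans_lt
      ((min_le_left _ _).trans_lt (half_lt_self hε))
    · rintro y (hy | hy)
      · rw [infDist_zero_of_mem hy]
        exact hr.le
      · exact hQr' hy
    · intro y hy
      have hyB : y ∈ (A : Set X) ∪ closure Q := .inl hy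
      exact (infDist_zero_of_mem hyB).trans_le hr.le

theorem isCompact_biUnion_coe {𝒜 : Set (Hyperspace X)} (h : IsCompact 𝒜) :
    IsCompact (⋃ A ∈ 𝒜, (A : Set X)) := by
  have := NonemptyCompacts.isCompact_biUnion_coe_of_isCompact (h.image continuous_subtype_val)
  rwa [biUnion_image] at this

attribute [local instance] TopologicalSpace.vietoris in
theorem isConnected_biUnion_coe {𝒜 : Set (Hyperspace X)} (h : IsConnected 𝒜) :
    IsConnected (⋃ A ∈ 𝒜, (A : Set X)) := by
  obtain ⟨A, hA⟩ := h.nonempty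
  obtain ⟨x, hx⟩ := A.1.nonempty
  exact ⟨⟨x, mem_biUnion hA hx⟩, TopologicalSpace.vietoris.isPreconnected_biUnion h.isPreconnected
    (NonemptyCompacts.continuous_coe.comp continuous_subtype_val).continuousOn
    ⟨A, hA, A.2.isPreconnected⟩⟩

theorem diff_subset_of_forall_subset_union {FB : Set (Hyperspace X)}
    (hFB : IsAntichain (· ≤ ·) FB) {A₀ C : Set X}
    (hA₀ : ∀ B ∈ FB, Disjoint A₀ (B : Set X)) {B₀ : Hyperspace X} (hB₀ : B₀ ∈ FB)
    (hB₀C : ((B₀ : Set X) ∩ C).Nonempty)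
    (h : ∀ B ∈ FB, ((B : Set X) ∩ C).Nonempty → ∀ B' ∈ FB, (B' : Set X) ⊆ A₀ ∪ C ∪ B) :
    ∀ B ∈ FB, ∀ B' ∈ FB, (B : Set X) \ C ⊆ B' := by
  have hmeet : ∀ B ∈ FB, ((B : Set X) ∩ C).Nonempty := by
    intro B hB
    by_contra hBC
    have hBB₀ : B ≤ B₀ := fun x hx => (h B₀ hB₀ hB₀C B hB hx).resolve_left <| by
      rintro (hxA₀ | hxC)
      exacts [disjoint_left.1 (hA₀ B hB) hxA₀ hx, hBC ⟨x, hx, hxC⟩]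
    exact hBC (hFB.eq hB hB₀ hBB₀ ▸ hB₀C)
  intro B hB B' hB' x ⟨hxB, hxC⟩
  refine (h B' hB' (hmeet B' hB') B hB hxB).resolve_left ?_
  rintro (hxA₀ | hxC')
  exacts [disjoint_left.1 (hA₀ B hB) hxA₀ hxB, hxC hxC']

section Whitney

variable {μ : Hyperspace X → ℝ}

theorem isAntichain_preimage_singleton (hμ : StrictMono μ) (t : ℝ) :
    IsAntichain (· ≤ ·) (μ ⁻¹' {t}) :=
  fun _ hA _ hB hne hle => (hμ (lt_of_le_of_ne hle hne)).ne (hA.trans hB.symm)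

variable [CompactSpace X]

theorem isPreconnected_inter_Iic (hμc : Continuous μ) (hμ : StrictMono μ)
    {U : Set (Hyperspace X)} (hU : IsUpperSet U) (hUc : IsClosed U) (Z : Hyperspace X) :
    IsPreconnected (U ∩ Iic Z) := by
  by_cases hZ : Z ∈ U
  · refine (hUc.inter isClosed_Iic).isCompact.isPreconnected_of_forall_exists_gt
      hμc.continuousOn ⟨hZ, self_mem_Iic⟩ ?_
    rintro A ⟨hAU, hAZ⟩ hne W hW
    obtain ⟨ε, hε, hball⟩ := Metric.mem_nhds_iff.1 hW
    obtain ⟨B, hAB, hBZ, hdist⟩ := exists_lt_le_dist_lt (lt_of_le_of_ne hAZ hne) hε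
    exact ⟨B, ⟨⟨hU hAB.le hAU, hBZ⟩, hball hdist⟩, hμ hAB⟩
  · convert isPreconnected_empty
    exact eq_empty_of_forall_notMem fun A ⟨hAU, hAZ⟩ => hZ (hU hAZ hAU)

theorem exists_le_le_eq (hμc : Continuous μ) (hμ : StrictMono μ) {A Z : Hyperspace X}
    (hAZ : A ≤ Z) {s : ℝ} (h₁ : μ A ≤ s) (h₂ : s ≤ μ Z) : ∃ M, A ≤ M ∧ M ≤ Z ∧ μ M = s := by
  obtain ⟨M, ⟨hAM, hMZ⟩, hM⟩ :=
    (isPreconnected_inter_Iic hμc hμ (isUpperSet_Ici A) isClosed_Ici Z).intermediate_value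
      ⟨self_mem_Ici, hAZ⟩ ⟨hAZ, self_mem_Iic⟩ hμc.continuousOn ⟨h₁, h₂⟩
  exact ⟨M, hAM, hMZ, hM⟩

theorem isPreconnected_sublevel (hμc : Continuous μ) (hμ : StrictMono μ)
    {U : Set (Hyperspace X)} (hU : IsUpperSet U) (hUc : IsClosed U) {Z : Hyperspace X} {t : ℝ}
    {S : Set (Hyperspace X)} (hS : IsPreconnected S) (hSsub : S ⊆ U ∩ Iic Z ∩ μ ⁻¹' Iic t)
    (hSmeet : ∀ A ∈ U ∩ Iic Z ∩ μ ⁻¹' Iic t, (S ∩ Iic A).Nonempty) :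
    IsPreconnected (U ∩ Iic Z ∩ μ ⁻¹' Iic t) := by
  rcases eq_empty_or_nonempty (U ∩ Iic Z ∩ μ ⁻¹' Iic t) with h | ⟨A₀, hA₀⟩
  · rw [h]
    exact isPreconnected_empty
  obtain ⟨x, hxS, -⟩ := hSmeet A₀ hA₀
  refine isPreconnected_of_forall x fun A hA => ⟨S ∪ (U ∩ Iic A), union_subset hSsub ?_, .inl hxS,
    .inr ⟨hA.1.1, self_mem_Iic⟩, hS.union' ?_ (isPreconnected_inter_Iic hμc hμ hU hUc A)⟩
  · rintro B ⟨hBU, hBA⟩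
    exact ⟨⟨hBU, mem_Iic.2 (le_trans hBA hA.1.2)⟩, mem_Iic.2 (le_trans (hμ.monotone hBA) hA.2)⟩
  · obtain ⟨B, hBS, hBA⟩ := hSmeet A hA
    exact ⟨B, hBS, (hSsub hBS).1.1, hBA⟩

theorem exists_lt_lt_with_common_upper (hμc : Continuous μ) (hμ : StrictMono μ)
    {A B₁ B₂ Z : Hyperspace X} (h₁ : A < B₁) (h₂ : A < B₂) (hB₁ : B₁ ≤ Z) (hB₂ : B₂ ≤ Z) {t : ℝ} (hAt : μ A < t)
    (htZ : t ≤ μ Z) :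
    ∃ C₁ C₂ M, A < C₁ ∧ C₁ ≤ B₁ ∧ A < C₂ ∧ C₂ ≤ B₂ ∧ C₁ ≤ M ∧ C₂ ≤ M ∧ M ≤ Z ∧ μ M = t := by
  obtain ⟨δ, hδ, hμδ⟩ := Metric.continuous_iff.1 hμc A (t - μ A) (sub_pos.2 hAt)
  obtain ⟨C₁, hAC₁, hC₁B₁, hd₁⟩ := exists_lt_le_dist_lt h₁ hδ
  obtain ⟨C₂, hAC₂, hC₂B₂, hd₂⟩ := exists_lt_le_dist_lt h₂ hδ
  obtain ⟨a, ha⟩ := A.1.nonempty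
  set C := union C₁ C₂ ⟨a, hAC₁.le ha, hAC₂.le ha⟩
  have hCt : μ C < t := by
    have := hμδ C ((dist_union_le _).trans_lt (max_lt hd₁ hd₂))
    rw [Real.dist_eq] at this
    linarith [le_abs_self (μ C - μ A)]
  obtain ⟨M, hCM, hMZ, hM⟩ := exists_le_le_eq hμc hμ
    (union_subset (hC₁B₁.trans hB₁) (hC₂B₂.trans hB₂) : C ≤ Z) hCt.le htZ
  exact ⟨C₁, C₂, M, hAC₁, hC₁B₁, hAC₂, hC₂B₂, subset_union_left.trans hCM,
    subset_union_right.trans hCM, hMZ, hM⟩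

theorem exists_gt_mem_lowerClosure_inter (hμc : Continuous μ) (hμ : StrictMono μ)
    {U : Set (Hyperspace X)} (hU : IsUpperSet U) {Z : Hyperspace X} {t : ℝ} (htZ : t ≤ μ Z)
    {H K : Set (Hyperspace X)} (hHK : U ∩ Iic Z ∩ μ ⁻¹' {t} ⊆ H ∪ K) {A : Hyperspace X}
    (hA : A ∈ U ∩ Iic Z ∩ μ ⁻¹' Iic t) (hAt : μ A < t)
    (hAH : A ∈ lowerClosure (U ∩ Iic Z ∩ μ ⁻¹' {t} ∩ H))
    (hAK : A ∈ lowerClosure (U ∩ Iic Z ∩ μ ⁻¹' {t} ∩ K)) :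
    ∃ A' ∈ U ∩ Iic Z ∩ μ ⁻¹' Iic t, A' ∈ lowerClosure (U ∩ Iic Z ∩ μ ⁻¹' {t} ∩ H) ∧
      A' ∈ lowerClosure (U ∩ Iic Z ∩ μ ⁻¹' {t} ∩ K) ∧ μ A < μ A' := by
  obtain ⟨B₁, hB₁, hAB₁⟩ := hAH
  obtain ⟨B₂, hB₂, hAB₂⟩ := hAK
  have hlt : ∀ B ∈ U ∩ Iic Z ∩ μ ⁻¹' {t}, A ≤ B → A < B := fun B hB hAB =>
    lt_of_le_of_ne hAB fun h => hAt.ne (h ▸ hB.2)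
  obtain ⟨C₁, C₂, M, hAC₁, hC₁B₁, hAC₂, hC₂B₂, hC₁M, hC₂M, hMZ, hM⟩ :=
    exists_lt_lt_with_common_upper hμc hμ (hlt B₁ hB₁.1 hAB₁) (hlt B₂ hB₂.1 hAB₂) hB₁.1.1.2
      hB₂.1.1.2 hAt htZ
  have hML : M ∈ U ∩ Iic Z ∩ μ ⁻¹' {t} := ⟨⟨hU (hAC₁.le.trans hC₁M) hA.1.1, hMZ⟩, hM⟩
  have hmem : ∀ {C B}, A < C → C ≤ B → B ∈ U ∩ Iic Z ∩ μ ⁻¹' {t} →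
      C ∈ U ∩ Iic Z ∩ μ ⁻¹' Iic t := fun hAC hCB hB =>
    ⟨⟨hU hAC.le hA.1.1, mem_Iic.2 (hCB.trans hB.1.2)⟩,
      mem_Iic.2 ((hμ.monotone hCB).trans hB.2.le)⟩
  rcases hHK hML with hMH | hMK
  · exact ⟨C₂, hmem hAC₂ hC₂B₂ hB₂.1, ⟨M, ⟨hML, hMH⟩, hC₂M⟩, ⟨B₂, hB₂, hC₂B₂⟩, hμ hAC₂⟩
  · exact ⟨C₁, hmem hAC₁ hC₁B₁ hB₁.1, ⟨B₁, hB₁, hC₁B₁⟩, ⟨M, ⟨hML, hMK⟩, hC₁M⟩, hμ hAC₁⟩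

theorem isPreconnected_level (hμc : Continuous μ) (hμ : StrictMono μ)
    {U : Set (Hyperspace X)} (hU : IsUpperSet U) (hUc : IsClosed U) {Z : Hyperspace X} {t : ℝ}
    (htZ : t ≤ μ Z) (hΛ : IsPreconnected (U ∩ Iic Z ∩ μ ⁻¹' Iic t)) :
    IsPreconnected (U ∩ Iic Z ∩ μ ⁻¹' {t}) := by
  set Λ := U ∩ Iic Z ∩ μ ⁻¹' Iic t
  set L := U ∩ Iic Z ∩ μ ⁻¹' {t}
  have hLc : IsClosed L := (hUc.inter isClosed_Iic).inter (isClosed_singleton.preimage hμc)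
  have hΛc : IsClosed Λ := (hUc.inter isClosed_Iic).inter (isClosed_Iic.preimage hμc)
  have hLΛ : L ⊆ Λ := fun B hB => ⟨hB.1, mem_Iic.2 hB.2.le⟩
  rw [isPreconnected_closed_iff]
  intro H K hH hK hHK ⟨B₁, hB₁L, hB₁H⟩ ⟨B₂, hB₂L, hB₂K⟩
  by_contra hHK'
  have hDH := (hLc.inter hH).lowerClosure_of_compactSpace
  have hDK := (hLc.inter hK).lowerClosure_of_compactSpace
  have hcover : Λ ⊆ lowerClosure (L ∩ H) ∪ lowerClosure (L ∩ K) := by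
    intro A hA
    obtain ⟨M, hAM, hMZ, hM⟩ := exists_le_le_eq hμc hμ hA.1.2 hA.2 htZ
    have hML : M ∈ L := ⟨⟨hU hAM hA.1.1, hMZ⟩, hM⟩
    rcases hHK hML with hMH | hMK
    exacts [.inl ⟨M, ⟨hML, hMH⟩, hAM⟩, .inr ⟨M, ⟨hML, hMK⟩, hAM⟩]
  obtain ⟨A, ⟨hAΛ, hAH, hAK⟩, hAmax⟩ := (hΛc.inter (hDH.inter hDK)).isCompact.exists_isMaxOn
    (isPreconnected_closed_iff.1 hΛ _ _ hDH hDK hcover ⟨B₁, hLΛ hB₁L, B₁, ⟨hB₁L, hB₁H⟩, le_rfl⟩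
      ⟨B₂, hLΛ hB₂L, B₂, ⟨hB₂L, hB₂K⟩, le_rfl⟩) hμc.continuousOn
  rcases (show μ A ≤ t from hAΛ.2).lt_or_eq with hAt | hAt
  · obtain ⟨A', hA'Λ, hA'H, hA'K, hAA'⟩ :=
      exists_gt_mem_lowerClosure_inter hμc hμ hU htZ hHK hAΛ hAt hAH hAK
    exact (hAmax ⟨hA'Λ, hA'H, hA'K⟩).not_gt hAA'
  · obtain ⟨B, ⟨hBL, hBH⟩, hAB⟩ := hAH
    obtain ⟨B', ⟨hB'L, hB'K⟩, hAB'⟩ := hAK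
    have hAL : A ∈ L := ⟨hAΛ.1, hAt⟩
    have hAB := (isAntichain_preimage_singleton hμ t).eq hAt hBL.2 hAB
    have hAB' := (isAntichain_preimage_singleton hμ t).eq hAt hB'L.2 hAB'
    subst hAB hAB'
    exact hHK' ⟨A, hAL, hBH, hB'K⟩

theorem isConnected_Iic_inter_level (hμc : Continuous μ) (hμ : StrictMono μ)
    (hμ0 : ∀ A : Hyperspace X, (A : Set X).Subsingleton → μ A = 0) {Z : Hyperspace X} {t : ℝ}
    (ht : 0 ≤ t) (htZ : t ≤ μ Z) : IsConnected (Iic Z ∩ μ ⁻¹' {t}) := by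
  have h0 : ∀ x, μ (.singleton x) ≤ t := fun x => (hμ0 _ subsingleton_singleton).trans_le ht
  obtain ⟨z, hz⟩ := Z.1.nonempty
  obtain ⟨M, -, hMZ, hM⟩ := exists_le_le_eq hμc hμ (singleton_le_iff.2 hz) (h0 z) htZ
  refine ⟨⟨M, hMZ, hM⟩, ?_⟩
  have hS : IsPreconnected (Hyperspace.singleton '' (Z : Set X)) :=
    Z.2.isPreconnected.image _ continuous_singleton.continuousOn
  simpa using isPreconnected_level hμc hμ isUpperSet_univ isClosed_univ htZ <|
    isPreconnected_sublevel hμc hμ isUpperSet_univ isClosed_univ hS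
      (by rintro _ ⟨x, hx, rfl⟩; exact ⟨⟨trivial, singleton_le_iff.2 hx⟩, h0 x⟩)
      fun A hA => by
        obtain ⟨a, ha⟩ := A.1.nonempty
        exact ⟨_, ⟨a, hA.1.2 ha, rfl⟩, singleton_le_iff.2 ha⟩

theorem isConnected_Icc_singleton_inter_level (hμc : Continuous μ) (hμ : StrictMono μ)
    (hμ0 : ∀ A : Hyperspace X, (A : Set X).Subsingleton → μ A = 0) {Z : Hyperspace X} {q : X}
    (hq : q ∈ (Z : Set X)) {t : ℝ} (ht : 0 ≤ t) (htZ : t ≤ μ Z) :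
    IsConnected (Icc (.singleton q) Z ∩ μ ⁻¹' {t}) := by
  have hq0 : μ (.singleton q) ≤ t := (hμ0 _ subsingleton_singleton).trans_le ht
  obtain ⟨M, hqM, hMZ, hM⟩ := exists_le_le_eq hμc hμ (singleton_le_iff.2 hq) hq0 htZ
  refine ⟨⟨M, ⟨hqM, hMZ⟩, hM⟩, ?_⟩
  rw [← Ici_inter_Iic]
  exact isPreconnected_level hμc hμ (isUpperSet_Ici _) isClosed_Ici htZ <|
    isPreconnected_sublevel hμc hμ (isUpperSet_Ici _) isClosed_Ici isPreconnected_singleton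
      (singleton_subset_iff.2 ⟨⟨self_mem_Ici, singleton_le_iff.2 hq⟩, hq0⟩)
      fun A hA => ⟨_, rfl, hA.1.1⟩

theorem exists_witness_Iic (hμc : Continuous μ) (hμ : StrictMono μ)
    (hμ0 : ∀ A : Hyperspace X, (A : Set X).Subsingleton → μ A = 0) {t : ℝ} (ht : 0 ≤ t)
    {FA FB : Set (Hyperspace X)} (hFA : FA ⊆ μ ⁻¹' {t}) (hFB : FB ⊆ μ ⁻¹' {t})
    {Z A₀ B₀ B₁ : Hyperspace X} (hA₀ : A₀ ∈ FA) (hB₀ : B₀ ∈ FB) (hB₁ : B₁ ∈ FB)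
    (hA₀Z : A₀ ≤ Z) (hB₀Z : B₀ ≤ Z) (hB₁Z : ¬B₁ ≤ Z) :
    ∃ 𝒞 ⊆ μ ⁻¹' {t}, IsDStarStarWitness FA FB 𝒞 :=
  ⟨Iic Z ∩ μ ⁻¹' {t}, inter_subset_right,
    (isClosed_Iic.inter (isClosed_singleton.preimage hμc)).isCompact,
    isConnected_Iic_inter_level hμc hμ hμ0 ht ((hFA hA₀).symm.le.trans (hμ.monotone hA₀Z)),
    ⟨A₀, hA₀, hA₀Z, hFA hA₀⟩, ⟨B₀, hB₀, hB₀Z, hFB hB₀⟩, ⟨B₁, hB₁, fun h => hB₁Z h.1⟩⟩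

theorem exists_witness_Icc_singleton (hμc : Continuous μ) (hμ : StrictMono μ)
    (hμ0 : ∀ A : Hyperspace X, (A : Set X).Subsingleton → μ A = 0) {t : ℝ} (ht : 0 ≤ t)
    {FA FB : Set (Hyperspace X)} (hFA : FA ⊆ μ ⁻¹' {t}) (hFB : FB ⊆ μ ⁻¹' {t})
    {A₀ B₀ B₁ : Hyperspace X} (hA₀ : A₀ ∈ FA) (hB₀ : B₀ ∈ FB) (hB₁ : B₁ ∈ FB) {q : X}
    (hqA₀ : q ∈ (A₀ : Set X)) (hqB₀ : q ∈ (B₀ : Set X)) (hqB₁ : q ∉ (B₁ : Set X)) :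
    ∃ 𝒞 ⊆ μ ⁻¹' {t}, IsDStarStarWitness FA FB 𝒞 := by
  set Z := union A₀ B₀ ⟨q, hqA₀, hqB₀⟩
  refine ⟨Icc (.singleton q) Z ∩ μ ⁻¹' {t}, inter_subset_right,
    (isClosed_Icc.inter (isClosed_singleton.preimage hμc)).isCompact,
    isConnected_Icc_singleton_inter_level hμc hμ hμ0 (Z := Z) (Or.inl hqA₀) ht
      ((hFA hA₀).symm.le.trans (hμ.monotone subset_union_left)),
    ⟨A₀, hA₀, ⟨singleton_le_iff.2 hqA₀, subset_union_left⟩, hFA hA₀⟩,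
    ⟨B₀, hB₀, ⟨singleton_le_iff.2 hqB₀, subset_union_right⟩, hFB hB₀⟩,
    ⟨B₁, hB₁, fun h => hqB₁ (singleton_le_iff.1 h.1.1)⟩⟩

theorem exists_witness_of_mem_inter (hμc : Continuous μ) (hμ : StrictMono μ)
    (hμ0 : ∀ A : Hyperspace X, (A : Set X).Subsingleton → μ A = 0) {t : ℝ} (ht : 0 ≤ t)
    {FA FB : Set (Hyperspace X)} (hFA : FA ⊆ μ ⁻¹' {t}) (hFB : FB ⊆ μ ⁻¹' {t})
    (hFBnt : FB.Nontrivial) {Ap Bp : Hyperspace X} (hAp : Ap ∈ FA) (hBp : Bp ∈ FB) {p : X}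
    (hpA : p ∈ (Ap : Set X)) (hpB : p ∈ (Bp : Set X)) :
    ∃ 𝒞 ⊆ μ ⁻¹' {t}, IsDStarStarWitness FA FB 𝒞 := by
  by_cases h₁ : ∃ A ∈ FA, ∃ B₀ ∈ FB, ∃ B₁ ∈ FB, ∃ q ∈ (A : Set X) ∩ B₀, q ∉ (B₁ : Set X)
  · obtain ⟨A, hA, B₀, hB₀, B₁, hB₁, q, ⟨hqA, hqB₀⟩, hqB₁⟩ := h₁
    exact exists_witness_Icc_singleton hμc hμ hμ0 ht hFA hFB hA hB₀ hB₁ hqA hqB₀ hqB₁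
  push Not at h₁
  by_cases h₂ : ∃ B₀ ∈ FB, ∃ B₁ ∈ FB, ¬(B₁ : Set X) ⊆ Ap ∪ B₀
  · obtain ⟨B₀, hB₀, B₁, hB₁, hB₁Z⟩ := h₂
    exact exists_witness_Iic hμc hμ hμ0 ht hFA hFB
      (Z := union Ap B₀ ⟨p, hpA, h₁ Ap hAp Bp hBp B₀ hB₀ p ⟨hpA, hpB⟩⟩) hAp hB₀ hB₁
      subset_union_left subset_union_right hB₁Z
  push Not at h₂
  -- Now any two members of `FB` would be nested.
  obtain ⟨B₁, hB₁, B₂, hB₂, hne⟩ := hFBnt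
  obtain ⟨q, hqB₂, hqB₁⟩ := not_subset.1 fun h =>
    hne ((isAntichain_preimage_singleton hμ t).eq (hFB hB₂) (hFB hB₁) h).symm
  have hqA : q ∈ (Ap : Set X) := (h₂ B₁ hB₁ B₂ hB₂ hqB₂).resolve_right hqB₁
  exact absurd (h₁ Ap hAp B₂ hB₂ B₁ hB₁ q ⟨hqA, hqB₂⟩) hqB₁

theorem exists_witness_of_disjoint (hμc : Continuous μ) (hμ : StrictMono μ)
    (hμ0 : ∀ A : Hyperspace X, (A : Set X).Subsingleton → μ A = 0) {t : ℝ} (ht : 0 ≤ t)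
    {FA FB : Set (Hyperspace X)} (hFA : FA ⊆ μ ⁻¹' {t}) (hFB : FB ⊆ μ ⁻¹' {t})
    (hFBnt : FB.Nontrivial) (hdisj : Disjoint (⋃ A ∈ FA, (A : Set X)) (⋃ B ∈ FB, (B : Set X)))
    {C : Set X} (hCc : IsCompact C) (hC : IsConnected C) {A₀ B₀ Bb : Hyperspace X}
    (hA₀ : A₀ ∈ FA) (hA₀C : ((A₀ : Set X) ∩ C).Nonempty) (hB₀ : B₀ ∈ FB)
    (hB₀C : ((B₀ : Set X) ∩ C).Nonempty) (hBb : Bb ∈ FB) {b : X} (hbBb : b ∈ (Bb : Set X))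
    (hbC : b ∉ C) :
    ∃ 𝒞 ⊆ μ ⁻¹' {t}, IsDStarStarWitness FA FB 𝒞 := by
  have hA₀FB : ∀ B ∈ FB, Disjoint (A₀ : Set X) B := fun B hB =>
    hdisj.mono (subset_biUnion_of_mem (u := fun A : Hyperspace X => (A : Set X)) hA₀)
      (subset_biUnion_of_mem (u := fun A : Hyperspace X => (A : Set X)) hB)
  set Z₁ := union A₀ (mk C hCc hC) hA₀C
  have htZ₁ : t ≤ μ Z₁ := (hFA hA₀).symm.le.trans (hμ.monotone subset_union_left)
  by_cases h₁ : ∃ B ∈ FB, ∃ hBC : ((B : Set X) ∩ C).Nonempty, ∃ B₁ ∈ FB,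
      ¬(B₁ : Set X) ⊆ A₀ ∪ C ∪ B
  · obtain ⟨B, hB, ⟨y, hyB, hyC⟩, B₁, hB₁, hB₁Z⟩ := h₁
    exact exists_witness_Iic hμc hμ hμ0 ht hFA hFB (Z := union Z₁ B ⟨y, .inr hyC, hyB⟩) hA₀ hB
      hB₁ (subset_union_left.trans subset_union_left) subset_union_right hB₁Z
  push Not at h₁
  -- Now all members of `FB` agree off `C`: they all contain `b`, and two of them differ inside `C`.
  have hdiff := diff_subset_of_forall_subset_union
    ((isAntichain_preimage_singleton hμ t).subset hFB) hA₀FB hB₀ hB₀C h₁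
  obtain ⟨B₁, hB₁, B₂, hB₂, hne⟩ := hFBnt
  obtain ⟨q, hqB₂, hqB₁⟩ := not_subset.1 fun h =>
    hne ((isAntichain_preimage_singleton hμ t).eq (hFB hB₂) (hFB hB₁) h).symm
  have hqC : q ∈ C := by_contra fun hqC => hqB₁ (hdiff B₂ hB₂ B₁ hB₁ ⟨hqB₂, hqC⟩)
  have hqZ₁ : q ∈ (Z₁ : Set X) := .inr hqC
  set Z₂ := union Z₁ B₂ ⟨q, hqZ₁, hqB₂⟩
  obtain ⟨M, ⟨hqM, hMZ₁⟩, hM⟩ :=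
    (isConnected_Icc_singleton_inter_level hμc hμ hμ0 hqZ₁ ht htZ₁).nonempty
  have hlevel : IsClosed (μ ⁻¹' {t}) := isClosed_singleton.preimage hμc
  refine ⟨(Iic Z₁ ∩ μ ⁻¹' {t}) ∪ (Icc (.singleton q) Z₂ ∩ μ ⁻¹' {t}),
    union_subset inter_subset_right inter_subset_right,
    ((isClosed_Iic.inter hlevel).union (isClosed_Icc.inter hlevel)).isCompact,
    (isConnected_Iic_inter_level hμc hμ hμ0 ht htZ₁).union
      ⟨M, ⟨hMZ₁, hM⟩, ⟨hqM, hMZ₁.trans subset_union_left⟩, hM⟩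
      (isConnected_Icc_singleton_inter_level hμc hμ hμ0 (Z := Z₂) (Or.inl hqZ₁) ht
        (htZ₁.trans (hμ.monotone subset_union_left))),
    ⟨A₀, hA₀, .inl ⟨subset_union_left, hFA hA₀⟩⟩,
    ⟨B₂, hB₂, .inr ⟨⟨singleton_le_iff.2 hqB₂, subset_union_right⟩, hFB hB₂⟩⟩, B₁, hB₁, ?_⟩
  have hbB₁ : b ∈ (B₁ : Set X) := hdiff Bb hBb B₁ hB₁ ⟨hbBb, hbC⟩
  rintro (⟨hB₁Z₁, -⟩ | ⟨⟨hqB₁', -⟩, -⟩)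
  · rcases hB₁Z₁ hbB₁ with hbA₀ | hbC'
    exacts [disjoint_left.1 (hA₀FB B₁ hB₁) hbA₀ hbB₁, hbC hbC']
  · exact hqB₁ (singleton_le_iff.1 hqB₁')

theorem exists_witness (hX : DStarStarSpace X) (hμc : Continuous μ) (hμ : StrictMono μ)
    (hμ0 : ∀ A : Hyperspace X, (A : Set X).Subsingleton → μ A = 0) {t : ℝ} (ht : 0 < t)
    {FA FB : Set (Hyperspace X)} (hFAc : IsCompact FA) (hFA : IsConnected FA)
    (hFAt : FA ⊆ μ ⁻¹' {t}) (hFBc : IsCompact FB) (hFB : IsConnected FB)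
    (hFBt : FB ⊆ μ ⁻¹' {t}) (hFBnt : FB.Nontrivial) :
    ∃ 𝒞 ⊆ μ ⁻¹' {t}, IsDStarStarWitness FA FB 𝒞 := by
  have hnt : ∀ {F : Set (Hyperspace X)}, F.Nonempty → F ⊆ μ ⁻¹' {t} →
      (⋃ A ∈ F, (A : Set X)).Nontrivial := fun ⟨A, hA⟩ hFt =>
    (not_subsingleton_iff.1 fun h => ht.ne' ((hFt hA).symm.trans (hμ0 A h))).mono
      (subset_biUnion_of_mem (u := fun A : Hyperspace X => (A : Set X)) hA)
  by_cases hdisj : Disjoint (⋃ A ∈ FA, (A : Set X)) (⋃ B ∈ FB, (B : Set X))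
  · obtain ⟨C, hCc, hC, ⟨a, ha, haC⟩, ⟨c, hc, hcC⟩, ⟨b, hb, hbC⟩⟩ :=
      hX _ _ (isCompact_biUnion_coe hFAc) (isConnected_biUnion_coe hFA) (hnt hFA.nonempty hFAt)
        (isCompact_biUnion_coe hFBc) (isConnected_biUnion_coe hFB) (hnt hFB.nonempty hFBt) hdisj
    obtain ⟨A₀, hA₀, haA₀⟩ := mem_iUnion₂.1 ha
    obtain ⟨B₀, hB₀, hcB₀⟩ := mem_iUnion₂.1 hc
    obtain ⟨Bb, hBb, hbBb⟩ := mem_iUnion₂.1 hb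
    exact exists_witness_of_disjoint hμc hμ hμ0 ht.le hFAt hFBt hFBnt hdisj hCc hC hA₀
      ⟨a, haA₀, haC⟩ hB₀ ⟨c, hcB₀, hcC⟩ hBb hbBb hbC
  · obtain ⟨p, hpA, hpB⟩ := not_disjoint_iff.1 hdisj
    obtain ⟨Ap, hAp, hpAp⟩ := mem_iUnion₂.1 hpA
    obtain ⟨Bp, hBp, hpBp⟩ := mem_iUnion₂.1 hpB
    exact exists_witness_of_mem_inter hμc hμ hμ0 ht.le hFAt hFBt hFBnt hAp hBp hpAp hpBp

end Whitney

end Hyperspace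

/-- Being D** is a Whitney property: every Whitney level of a D**-continuum is a
D**-continuum. -/
theorem dStarStar_whitney_property (X : Type*) [MetricSpace X] [CompactSpace X]
    [ConnectedSpace X] (hX : DStarStarSpace X)
    (μ : Hyperspace X → ℝ) (hμcont : Continuous μ)
    (hμ0 : ∀ A : Hyperspace X, (A.1 : Set X).Subsingleton → μ A = 0)
    (hμmono : ∀ A B : Hyperspace X, (A.1 : Set X) ⊂ (B.1 : Set X) → μ A < μ B)
    (t : ℝ) (ht0 : 0 < t)
    (httop : t < μ ⟨⟨⟨Set.univ, isCompact_univ⟩, Set.univ_nonempty⟩, isConnected_univ⟩) :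
    CompactSpace {A : Hyperspace X // μ A = t} ∧
      ConnectedSpace {A : Hyperspace X // μ A = t} ∧
      DStarStarSpace {A : Hyperspace X // μ A = t} := by
  have hμ : StrictMono μ := fun A B h => hμmono A B h
  set Z : Hyperspace X := .mk univ isCompact_univ isConnected_univ
  have hall : μ ⁻¹' {t} ⊆ Iic Z := fun A _ => subset_univ (A : Set X)
  have hlevel := Hyperspace.isConnected_Iic_inter_level hμcont hμ hμ0 ht0.le (Z := Z) httop.le
  rw [inter_eq_right.2 hall] at hlevel
  refine ⟨isCompact_iff_compactSpace.mp (isClosed_singleton.preimage hμcont).isCompact,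
    isConnected_iff_connectedSpace.mp hlevel, dStarStarSpace_subtype ?_⟩
  intro FA FB hFA hFB hFAc hFAconn _ hFBc hFBconn hFBnt _
  exact Hyperspace.exists_witness hX hμcont hμ hμ0 ht0 hFAc hFAconn hFA hFBc hFBconn hFB hFBnt
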